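/- arXiv:math/0405529 — 9 statements merged into one kernel-verified Lean document; each statement's English description precedes it below -/
import Mathlib

section
/- Let p be a prime, A a commutative ring of characteristic p, and v ∈ A. Let B := A[X]/(X^p − v) (Mathlib's AdjoinRoot of the monic polynomial X^p − v). Then for u ∈ A, the image of u in B is a p-th power of an element of B if and only if there exist elements a₀, a₁, …, a_{p−1} ∈ A with u = ∑_{i=0}^{p−1} a_i^p · v^i. -/
/-!
Since `A` has characteristic `p` and `A → B` is injective (`B` is free over `A` with basis
`1, x, …, x^{p-1}`), the ring `B` has characteristic `p`, so the Frobenius of `B` is additive.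
Writing `b = ∑ aᵢ xⁱ` and using `x^p = v`, this gives `b^p = ∑ aᵢ^p vⁱ ∈ A`, which proves both
directions at once.
-/

open Polynomial

namespace AdjoinRoot

variable {A : Type*} [CommRing A] {q : A[X]}

theorem exists_eq_sum_of_mul_root_pow (hq : q.Monic) {n : ℕ} (hn : q.natDegree = n)
    (b : AdjoinRoot q) : ∃ a : Fin n → A, b = ∑ i : Fin n, of q (a i) * root q ^ (i : ℕ) := by
  subst hn
  let pb := powerBasis' hq
  refine ⟨pb.basis.repr b, ?_⟩
  conv_lhs => rw [← pb.basis.sum_repr b]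
  refine Finset.sum_congr rfl fun i _ => ?_
  rw [Algebra.smul_def, PowerBasis.basis_eq_pow, powerBasis'_gen, algebraMap_eq]

theorem of_injective_of_monic (hq : q.Monic) (hdeg : q.natDegree ≠ 0) :
    Function.Injective (of q) := by
  let pb := powerBasis' hq
  let zero : Fin pb.dim := ⟨0, Nat.pos_of_ne_zero hdeg⟩
  have h_repr (a : A) : pb.basis.repr (of q a) zero = a := by
    rw [← algebraMap_eq, Algebra.algebraMap_eq_smul_one, ← pow_zero pb.gen,
      ← show pb.basis zero = pb.gen ^ 0 from pb.basis_eq_pow zero, map_smul,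
      pb.basis.repr_self, Finsupp.smul_single_one, Finsupp.single_eq_same]
  intro a a' h
  rw [← h_repr a, ← h_repr a', h]

theorem root_pow_eq_of_X_pow_sub_C (n : ℕ) (v : A) :
    root (X ^ n - C v) ^ n = of (X ^ n - C v) v := by
  rw [← sub_eq_zero, ← eval₂_root, eval₂_sub, eval₂_C, eval₂_pow, eval₂_X]

end AdjoinRoot

theorem sum_algebraMap_mul_pow_pow_char {A B : Type*} [CommRing A] [CommRing B] [Algebra A B]
    (p : ℕ) [ExpChar B p] {v : A} {x : B} (hx : x ^ p = algebraMap A B v) {n : ℕ}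
    (a : Fin n → A) :
    (∑ i : Fin n, algebraMap A B (a i) * x ^ (i : ℕ)) ^ p =
      algebraMap A B (∑ i : Fin n, a i ^ p * v ^ (i : ℕ)) := by
  rw [sum_pow_char, map_sum]
  refine Finset.sum_congr rfl fun i _ => ?_
  rw [mul_pow, ← pow_mul, mul_comm (i : ℕ) p, pow_mul, hx, map_mul, map_pow, map_pow]

/-- Lemma 2.4.2 (first assertion): over a ring `A` of characteristic `p`, an element
`u ∈ A` becomes a `p`-th power in `B = A[X]/(X^p − v)` if and only if
`u = ∑_{i<p} aᵢ^p vⁱ` for some `aᵢ ∈ A`. -/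
theorem pth_power_in_alpha_p_extension_iff
    (p : ℕ) (hp : p.Prime) (A : Type*) [CommRing A] [CharP A p] (v : A) (u : A) :
    (∃ b : AdjoinRoot (X ^ p - C v), b ^ p = AdjoinRoot.of (X ^ p - C v) u) ↔
      (∃ a : Fin p → A, u = ∑ i : Fin p, a i ^ p * v ^ (i : ℕ)) := by
  have : Nontrivial A := CharP.nontrivial_of_char_ne_one hp.ne_one
  set q : A[X] := X ^ p - C v
  have hq : q.Monic := monic_X_pow_sub_C v hp.ne_zero
  have hdeg : q.natDegree = p := natDegree_X_pow_sub_C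
  have hinj := AdjoinRoot.of_injective_of_monic hq (hdeg ▸ hp.ne_zero)
  have : CharP (AdjoinRoot q) p := charP_of_injective_algebraMap hinj p
  have : ExpChar (AdjoinRoot q) p := ExpChar.prime hp
  have hpow (a : Fin p → A) :
      (∑ i : Fin p, AdjoinRoot.of q (a i) * AdjoinRoot.root q ^ (i : ℕ)) ^ p =
        AdjoinRoot.of q (∑ i : Fin p, a i ^ p * v ^ (i : ℕ)) :=
    sum_algebraMap_mul_pow_pow_char p (AdjoinRoot.root_pow_eq_of_X_pow_sub_C p v) a
  constructor
  · rintro ⟨b, hb⟩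
    obtain ⟨a, rfl⟩ := AdjoinRoot.exists_eq_sum_of_mul_root_pow hq hdeg b
    exact ⟨a, hinj (hb.symm.trans (hpow a))⟩
  · rintro ⟨a, rfl⟩
    exact ⟨_, hpow a⟩
end

section
/- Let p be a prime, A a commutative ring of characteristic p, π, v ∈ A, n a positive integer and m an integer. Let B := A[X]/(X^p − π^{n(p−1)}X − v) with T the image of X, and let B_π be the localization of B inverting (the image of) π, in which π becomes a unit. Then for any a₀, a₁, …, a_{p−1} ∈ A there exist h ∈ B and b ∈ B_π such that, in B_π, π^{−pm}·∑_{i=0}^{p−1} a_i^p v^i = π^{−m}·∑_{i=0}^{p−1} a_i T^i − π^{−(pm−n(p−1))}·∑_{j=1}^{p−1} j·a_j^p·T^{p(j−1)+1} + π^{−(pm−2n(p−1))}·h + (b^p − b), where negative powers of π denote powers of the inverse of the unit π in B_π. -/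
/-!
With `t` the root and `w = π^{n(p-1)}`, so that `t^p = w t + v`, Frobenius gives
`(∑ aᵢ tⁱ)^p = ∑ aᵢ^p (v + w t)^i`. Modulo `w²` the binomial expansion gives
`(v + w t)^i ≡ v^i + i v^{i-1} w t`, and modulo `w` one has `t^{p(j-1)+1} ≡ v^{j-1} t`,
so `(∑ aᵢ tⁱ)^p ≡ ∑ aᵢ^p vⁱ + w ∑ j aⱼ^p t^{p(j-1)+1}` modulo `w²`. Multiplying by `π^{-pm}`
and taking `b = π^{-m} ∑ aᵢ tⁱ` turns this into the claimed identity.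
-/

open Polynomial Finset

/-- The polynomial `X^p − π^{n(p−1)}·X − v`. -/
noncomputable abbrev asPoly (p : ℕ) {A : Type*} [CommRing A] (π v : A) (n : ℕ) : Polynomial A :=
  X ^ p - C (π ^ (n * (p - 1))) * X - C v

/-- `B = A[X]/(X^p − π^{n(p−1)}X − v)`. -/
noncomputable abbrev asExt (p : ℕ) {A : Type*} [CommRing A] (π v : A) (n : ℕ) : Type _ :=
  AdjoinRoot (asPoly p π v n)

/-- The localization `B_π` of `B` inverting the image of `π`. -/
noncomputable abbrev asExtLoc (p : ℕ) {A : Type*} [CommRing A] (π v : A) (n : ℕ) : Type _ :=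
  Localization.Away (AdjoinRoot.of (asPoly p π v n) π)

/-- The canonical map `A → B_π`. -/
noncomputable def asIota (p : ℕ) {A : Type*} [CommRing A] (π v : A) (n : ℕ) :
    A →+* asExtLoc p π v n :=
  (algebraMap (asExt p π v n) (asExtLoc p π v n)).comp (AdjoinRoot.of (asPoly p π v n))

/-- The image of the root `T` in `B_π`. -/
noncomputable def asRootLoc (p : ℕ) {A : Type*} [CommRing A] (π v : A) (n : ℕ) :
    asExtLoc p π v n :=
  algebraMap (asExt p π v n) (asExtLoc p π v n) (AdjoinRoot.root (asPoly p π v n))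

section

variable {B : Type*} [CommRing B]

theorem sum_pow_eq_sum_pow_of_natCast_eq_zero {p : ℕ} (hp : p.Prime) (hpB : (p : B) = 0)
    {ι : Type*} (s : Finset ι) (f : ι → B) : (∑ i ∈ s, f i) ^ p = ∑ i ∈ s, f i ^ p := by
  rcases subsingleton_or_nontrivial B with _ | _
  · exact Subsingleton.elim _ _
  have := (CharP.charP_iff_prime_eq_zero hp).mpr hpB
  have := Fact.mk hp
  exact sum_pow_char p s f

theorem sq_dvd_add_mul_pow_sub (z w t : B) (i : ℕ) :
    w ^ 2 ∣ (z + w * t) ^ i - z ^ i - w * (i * z ^ (i - 1) * t) := by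
  convert (pow_dvd_pow_of_dvd (dvd_mul_right w t) 2).trans (sq_dvd_add_pow_sub_sub (w * t) z i)
    using 1
  ring

theorem dvd_pow_mul_add_one_sub {p : ℕ} {w z t : B} (ht : t ^ p = w * t + z) (j : ℕ) :
    w ∣ t ^ (p * j + 1) - z ^ j * t := by
  rw [pow_succ, pow_mul, ht, add_comm, ← sub_mul]
  have hw : w ∣ (z + w * t) ^ j - z ^ j :=
    (dvd_mul_right w t).trans (by simpa using sub_dvd_pow_sub_pow (z + w * t) z j)
  exact hw.mul_right t

theorem sq_dvd_sum_mul_pow_pow_sub {p : ℕ} (hp : p.Prime) (hpB : (p : B) = 0) {w z t : B}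
    (ht : t ^ p = w * t + z) (a : ℕ → B) :
    w ^ 2 ∣ (∑ i ∈ range p, a i * t ^ i) ^ p - ∑ i ∈ range p, a i ^ p * z ^ i
      - w * ∑ j ∈ Ico 1 p, (j : B) * a j ^ p * t ^ (p * (j - 1) + 1) := by
  have hfrob : (∑ i ∈ range p, a i * t ^ i) ^ p = ∑ i ∈ range p, a i ^ p * (z + w * t) ^ i := by
    rw [sum_pow_eq_sum_pow_of_natCast_eq_zero hp hpB]
    refine sum_congr rfl fun i _ => ?_
    rw [mul_pow, ← pow_mul, mul_comm i p, pow_mul, ht, add_comm]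
  have hlin : w * ∑ j ∈ Ico 1 p, (j : B) * a j ^ p * (z ^ (j - 1) * t)
      = ∑ i ∈ range p, a i ^ p * (w * (i * z ^ (i - 1) * t)) := by
    rw [range_eq_Ico, sum_eq_sum_Ico_succ_bot hp.pos, mul_sum]
    simp only [Nat.cast_zero, zero_mul, mul_zero, zero_add]
    exact sum_congr rfl fun _ _ => by ring
  have h₁ : w ^ 2 ∣
      ∑ i ∈ range p, a i ^ p * ((z + w * t) ^ i - z ^ i - w * (i * z ^ (i - 1) * t)) :=
    dvd_sum fun i _ => (sq_dvd_add_mul_pow_sub z w t i).mul_left _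
  have h₂ : w ^ 2 ∣
      w * ∑ j ∈ Ico 1 p, (j : B) * a j ^ p * (t ^ (p * (j - 1) + 1) - z ^ (j - 1) * t) := by
    rw [sq]
    exact mul_dvd_mul_left w (dvd_sum fun j _ => (dvd_pow_mul_add_one_sub ht _).mul_left _)
  convert dvd_sub h₁ h₂ using 1
  simp only [mul_sub, sum_sub_distrib, hfrob, hlin]
  ring

end

theorem AdjoinRoot.root_pow_eq_of_eq_sub_sub {A : Type*} [CommRing A] (p : ℕ) (c d : A) :
    root (X ^ p - C c * X - C d) ^ p
      = of (X ^ p - C c * X - C d) c * root (X ^ p - C c * X - C d) + of _ d := by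
  have h := AdjoinRoot.mk_self (f := X ^ p - C c * X - C d)
  simp only [map_sub, map_mul, map_pow, AdjoinRoot.mk_X, AdjoinRoot.mk_C] at h
  linear_combination h

theorem Units.val_zpow_neg_mul_eq_of_pow_eq {R : Type*} [CommRing R] (P : Rˣ) (p : ℕ) (m N : ℤ)
    {S Z S₂ H : R} (hS : S ^ p = Z + ↑(P ^ N) * S₂ + ↑(P ^ N) ^ 2 * H) :
    ↑(P ^ (-(p * m))) * Z = ↑(P ^ (-m)) * S - ↑(P ^ (-(p * m - N))) * S₂
      + ↑(P ^ (-(p * m - 2 * N))) * (-H) + ((↑(P ^ (-m)) * S) ^ p - ↑(P ^ (-m)) * S) := by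
  have hb : (↑(P ^ (-m)) * S) ^ p = ↑(P ^ (-(p * m))) * S ^ p := by
    rw [mul_pow, ← Units.val_pow_eq_pow_val, ← zpow_natCast, ← zpow_mul,
      show -m * (p : ℤ) = -(p * m) by ring, mul_comm]
  have h₁ : (↑(P ^ (-(p * m - N))) : R) = ↑(P ^ (-(p * m))) * ↑(P ^ N) := by
    rw [← Units.val_mul, ← zpow_add]; ring_nf
  have h₂ : (↑(P ^ (-(p * m - 2 * N))) : R) = ↑(P ^ (-(p * m))) * ↑(P ^ N) ^ 2 := by
    rw [← Units.val_pow_eq_pow_val, ← Units.val_mul, ← zpow_natCast, ← zpow_mul, ← zpow_add]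
    ring_nf
  rw [hb, hS, h₁, h₂]
  ring

theorem exists_sum_mul_asRootLoc_pow_pow_eq (p : ℕ) (hp : p.Prime) (A : Type*) [CommRing A]
    [CharP A p] (π v : A) (n : ℕ) (a : ℕ → A) :
    ∃ h : asExt p π v n, (∑ i ∈ range p, asIota p π v n (a i) * asRootLoc p π v n ^ i) ^ p
      = asIota p π v n (∑ i ∈ range p, a i ^ p * v ^ i)
        + asIota p π v n π ^ (n * (p - 1)) * ∑ j ∈ Ico 1 p, (j : asExtLoc p π v n) *
            asIota p π v n (a j) ^ p * asRootLoc p π v n ^ (p * (j - 1) + 1)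
        + (asIota p π v n π ^ (n * (p - 1))) ^ 2 * algebraMap _ _ h := by
  set ρ := AdjoinRoot.of (asPoly p π v n)
  have hpB : (p : asExt p π v n) = 0 := by
    rw [← map_natCast ρ, CharP.cast_eq_zero, map_zero]
  have hroot : AdjoinRoot.root (asPoly p π v n) ^ p
      = ρ π ^ (n * (p - 1)) * AdjoinRoot.root (asPoly p π v n) + ρ v := by
    rw [← map_pow]
    exact AdjoinRoot.root_pow_eq_of_eq_sub_sub p _ v
  obtain ⟨h, hh⟩ := sq_dvd_sum_mul_pow_pow_sub hp hpB hroot (fun i => ρ (a i))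
  refine ⟨h, ?_⟩
  have := congrArg (algebraMap (asExt p π v n) (asExtLoc p π v n)) hh
  simp only [map_sub, map_mul, map_pow, map_sum, map_natCast] at this
  simp only [asIota, asRootLoc, RingHom.comp_apply, map_sum, map_mul, map_pow]
  linear_combination this

theorem transform_pth_power_expression_general
    (p : ℕ) (hp : p.Prime) (A : Type*) [CommRing A] [CharP A p]
    (π v : A) (n : ℕ) (m : ℤ) (a : ℕ → A) :
    ∃ P : (asExtLoc p π v n)ˣ,
      (P : asExtLoc p π v n) = asIota p π v n π ∧
      ∃ (h : asExt p π v n) (b : asExtLoc p π v n),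
        (↑(P ^ (-(p * m))) : asExtLoc p π v n) *
            asIota p π v n (∑ i ∈ Finset.range p, a i ^ p * v ^ i) =
          (↑(P ^ (-m)) : asExtLoc p π v n) *
              (∑ i ∈ Finset.range p, asIota p π v n (a i) * asRootLoc p π v n ^ i) -
            (↑(P ^ (-(p * m - n * (p - 1)))) : asExtLoc p π v n) *
              (∑ j ∈ Finset.Ico 1 p,
                (j : asExtLoc p π v n) * asIota p π v n (a j) ^ p *
                  asRootLoc p π v n ^ (p * (j - 1) + 1)) +
            (↑(P ^ (-(p * m - 2 * (n * (p - 1))))) : asExtLoc p π v n) *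
              algebraMap (asExt p π v n) (asExtLoc p π v n) h +
            (b ^ p - b) := by
  obtain ⟨h, hS⟩ := exists_sum_mul_asRootLoc_pow_pow_eq p hp A π v n a
  have hu : IsUnit (asIota p π v n π) :=
    IsLocalization.Away.algebraMap_isUnit (AdjoinRoot.of (asPoly p π v n) π)
  have hPN : ((hu.unit ^ ((n : ℤ) * (p - 1)) : (asExtLoc p π v n)ˣ) : asExtLoc p π v n)
      = asIota p π v n π ^ (n * (p - 1)) := by
    rw [show (n : ℤ) * (p - 1) = ((n * (p - 1) : ℕ) : ℤ) by push_cast [hp.one_le]; ring,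
      zpow_natCast, Units.val_pow_eq_pow_val, hu.unit_spec]
  rw [← hPN] at hS
  refine ⟨hu.unit, hu.unit_spec, -h, ?_⟩
  rw [map_neg]
  exact ⟨_, Units.val_zpow_neg_mul_eq_of_pow_eq _ _ _ _ hS⟩

/-- Lemma 2.4.2 (second assertion): in `B_π`, the element `π^{−pm}·∑ aᵢ^p vⁱ` equals, up to
addition of an element of the form `b^p − b`,
`π^{−m}·∑ aᵢ Tⁱ − π^{−(pm−n(p−1))}·∑_{j=1}^{p−1} j aⱼ^p T^{p(j−1)+1} + π^{−(pm−2n(p−1))}·h`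
for some `h ∈ B`. -/
theorem transform_pth_power_expression
    (p : ℕ) (hp : p.Prime) (A : Type*) [CommRing A] [CharP A p]
    (π v : A) (n : ℕ) (hn : 0 < n) (m : ℤ) (a : ℕ → A) :
    ∃ P : (asExtLoc p π v n)ˣ,
      (P : asExtLoc p π v n) = asIota p π v n π ∧
      ∃ (h : asExt p π v n) (b : asExtLoc p π v n),
        (↑(P ^ (-(p * m))) : asExtLoc p π v n) *
            asIota p π v n (∑ i ∈ Finset.range p, a i ^ p * v ^ i) =
          (↑(P ^ (-m)) : asExtLoc p π v n) *
              (∑ i ∈ Finset.range p, asIota p π v n (a i) * asRootLoc p π v n ^ i) -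
            (↑(P ^ (-(p * m - n * (p - 1)))) : asExtLoc p π v n) *
              (∑ j ∈ Finset.Ico 1 p,
                (j : asExtLoc p π v n) * asIota p π v n (a j) ^ p *
                  asRootLoc p π v n ^ (p * (j - 1) + 1)) +
            (↑(P ^ (-(p * m - 2 * (n * (p - 1))))) : asExtLoc p π v n) *
              algebraMap (asExt p π v n) (asExtLoc p π v n) h +
            (b ^ p - b) :=
  transform_pth_power_expression_general p hp A π v n m a
end

section
/- Let p be a prime and F a field of characteristic p. Let v ∈ F be an element that is not a p-th power in F, and let B := F[X]/(X^p − v) with t the image of X. If a₁, …, a_{p−1} ∈ F are not all zero, then the element −∑_{j=1}^{p−1} j·a_j^p·t^{p(j−1)+1} of B is not a p-th power in B. -/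
/-!
In characteristic `p` the Frobenius map is additive, so in `B = F[t]` with `t ^ p = v ∈ F` every
`p`-th power lies in `F`. The given element equals `-(y ^ p * t)` with `y = ∑ j aⱼ t ^ (j - 1)`, and
`y ≠ 0` because its exponents stay below `p = deg (X ^ p - v)`. Were it `b ^ p`, then
`t = (-b / y) ^ p` would lie in `F`, and `v = t ^ p` would be a `p`-th power in `F`.
-/

open Polynomial

def Subalgebra.frobeniusPreimageBot (R : Type*) {A : Type*} [CommRing R] [CommRing A] [Algebra R A]
    (p : ℕ) [ExpChar A p] : Subalgebra R A where
  carrier := {b | b ^ p ∈ (⊥ : Subalgebra R A)}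
  mul_mem' {a b} (ha : a ^ p ∈ (⊥ : Subalgebra R A)) (hb : b ^ p ∈ (⊥ : Subalgebra R A)) :=
    show (a * b) ^ p ∈ (⊥ : Subalgebra R A) by rw [mul_pow]; exact mul_mem ha hb
  add_mem' {a b} (ha : a ^ p ∈ (⊥ : Subalgebra R A)) (hb : b ^ p ∈ (⊥ : Subalgebra R A)) :=
    show (a + b) ^ p ∈ (⊥ : Subalgebra R A) by rw [add_pow_expChar]; exact add_mem ha hb
  algebraMap_mem' r := show algebraMap R A r ^ p ∈ (⊥ : Subalgebra R A) by
    rw [← map_pow]; exact Subalgebra.algebraMap_mem ⊥ _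

theorem pow_char_mem_bot_of_mem_adjoin {R A : Type*} [CommRing R] [CommRing A] [Algebra R A]
    (p : ℕ) [ExpChar A p] {x : A} (hx : x ^ p ∈ (⊥ : Subalgebra R A)) {b : A}
    (hb : b ∈ Algebra.adjoin R {x}) : b ^ p ∈ (⊥ : Subalgebra R A) :=
  Algebra.adjoin_le (S := Subalgebra.frobeniusPreimageBot R p)
    (Set.singleton_subset_iff.2 (show x ^ p ∈ (⊥ : Subalgebra R A) from hx)) hb

theorem AdjoinRoot.pow_char_mem_bot {R : Type*} [CommRing R] {f : R[X]} (p : ℕ)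
    [ExpChar (AdjoinRoot f) p] (hroot : root f ^ p ∈ (⊥ : Subalgebra R (AdjoinRoot f)))
    (b : AdjoinRoot f) : b ^ p ∈ (⊥ : Subalgebra R (AdjoinRoot f)) :=
  pow_char_mem_bot_of_mem_adjoin p hroot (adjoinRoot_eq_top (f := f) ▸ Algebra.mem_top)

theorem AdjoinRoot.root_X_pow_sub_C_pow {R : Type*} [CommRing R] (n : ℕ) (v : R) :
    root (X ^ n - C v) ^ n = of (X ^ n - C v) v := by
  have h := eval₂_root (X ^ n - C v)
  rwa [eval₂_sub, eval₂_X_pow, eval₂_C, sub_eq_zero] at h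

theorem AdjoinRoot.root_X_pow_sub_C_notMem_bot {K : Type*} [Field K] {n : ℕ} (hn : n ≠ 0) {v : K}
    (hv : ¬ ∃ w : K, w ^ n = v) :
    root (X ^ n - C v) ∉ (⊥ : Subalgebra K (AdjoinRoot (X ^ n - C v))) := by
  rintro ⟨w, hw⟩
  refine hv ⟨w, of.injective_of_degree_ne_zero (f := X ^ n - C v) ?_ ?_⟩
  · rw [degree_X_pow_sub_C (Nat.pos_of_ne_zero hn)]; exact_mod_cast hn
  · rw [map_pow, ← root_X_pow_sub_C_pow]; exact congrArg (· ^ n) hw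

theorem natCast_pow_char {A : Type*} [CommRing A] (p : ℕ) [ExpChar A p] (j : ℕ) :
    (j : A) ^ p = j :=
  map_natCast (frobenius A p) j

theorem CharP.natCast_ne_zero_of_lt {R : Type*} [AddMonoidWithOne R] (p : ℕ) [CharP R p] {j : ℕ}
    (h0 : 0 < j) (hj : j < p) : (j : R) ≠ 0 := by
  rw [Ne, CharP.cast_eq_zero_iff R p]
  exact fun hdvd => (Nat.le_of_dvd h0 hdvd).not_gt hj

theorem sum_natCast_mul_pow_char_mul {A : Type*} [CommRing A] (p : ℕ) [ExpChar A p]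
    (s : Finset ℕ) (c : ℕ → A) (e : ℕ → ℕ) (t : A) :
    (∑ j ∈ s, (j : A) * c j * t ^ e j) ^ p * t =
      ∑ j ∈ s, (j : A) * c j ^ p * t ^ (p * e j + 1) := by
  rw [sum_pow_char, Finset.sum_mul]
  refine Finset.sum_congr rfl fun j _ => ?_
  rw [mul_pow, mul_pow, natCast_pow_char, ← pow_mul, pow_succ, mul_comm (e j)]
  ring

theorem AdjoinRoot.sum_of_mul_root_pow_ne_zero {R : Type*} [CommRing R] {f : R[X]} (hf : f.Monic)
    {s : Finset ℕ} (c : ℕ → R) {e : ℕ → ℕ} (he : Set.InjOn e s)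
    (hlt : ∀ i ∈ s, e i < f.natDegree) (hc : ∃ i ∈ s, c i ≠ 0) :
    ∑ i ∈ s, of f (c i) * root f ^ e i ≠ 0 := by
  obtain ⟨i₀, hi₀, hci₀⟩ := hc
  set g := ∑ i ∈ s, monomial (e i) (c i)
  have hcoeff : g.coeff (e i₀) = c i₀ := by
    rw [finsetSum_coeff, Finset.sum_eq_single_of_mem i₀ hi₀, coeff_monomial, if_pos rfl]
    intro i hi hne
    rw [coeff_monomial, if_neg (he.ne hi hi₀ hne)]
  have hg : g ≠ 0 := fun h => hci₀ (by rw [← hcoeff, h, coeff_zero])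
  have hdeg : g.natDegree ≤ f.natDegree - 1 :=
    natDegree_sum_le_of_forall_le s _ fun i hi =>
      (natDegree_monomial_le _).trans (Nat.le_sub_one_of_lt (hlt i hi))
  have := hlt i₀ hi₀
  convert mk_ne_zero_of_natDegree_lt hf hg (by omega) using 1
  simp [g, map_sum, ← C_mul_X_pow_eq_monomial]

/-- Lemma 2.4.2 (final assertion, over a field): if `v ∈ F` is not a `p`-th power and
`a₁, …, a_{p−1}` are not all zero, then `−∑_{j=1}^{p−1} j aⱼ^p t^{p(j−1)+1}`
is not a `p`-th power in `B = F[X]/(X^p − v)`. -/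
theorem not_pth_power_twisted_sum
    (p : ℕ) (hp : p.Prime) (F : Type*) [Field F] [CharP F p]
    (v : F) (hv : ¬ ∃ w : F, w ^ p = v)
    (a : ℕ → F) (ha : ∃ j ∈ Finset.Ico 1 p, a j ≠ 0) :
    ¬ ∃ b : AdjoinRoot (X ^ p - C v),
      b ^ p = -∑ j ∈ Finset.Ico 1 p,
        (j : AdjoinRoot (X ^ p - C v)) * AdjoinRoot.of (X ^ p - C v) (a j) ^ p *
          AdjoinRoot.root (X ^ p - C v) ^ (p * (j - 1) + 1) := by
  rintro ⟨b, hb⟩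
  have := Fact.mk hp
  have := Fact.mk (X_pow_sub_C_irreducible_of_prime hp fun w hw => hv ⟨w, hw⟩)
  have : CharP (AdjoinRoot (X ^ p - C v)) p :=
    charP_of_injective_algebraMap (algebraMap F _).injective p
  refine AdjoinRoot.root_X_pow_sub_C_notMem_bot hp.ne_zero hv ?_
  set t := AdjoinRoot.root (X ^ p - C v)
  set y := ∑ j ∈ Finset.Ico 1 p,
    (j : AdjoinRoot (X ^ p - C v)) * AdjoinRoot.of _ (a j) * t ^ (j - 1)
  have hy : y ≠ 0 := by
    have hja : ∃ j ∈ Finset.Ico 1 p, (j : F) * a j ≠ 0 := by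
      obtain ⟨j, hj, haj⟩ := ha
      obtain ⟨hj1, hjp⟩ := Finset.mem_Ico.1 hj
      exact ⟨j, hj, mul_ne_zero (CharP.natCast_ne_zero_of_lt p hj1 hjp) haj⟩
    simpa only [map_mul, map_natCast] using
      AdjoinRoot.sum_of_mul_root_pow_ne_zero (monic_X_pow_sub_C v hp.ne_zero) _
        (fun i hi j hj hij => by simp only [Finset.coe_Ico, Set.mem_Ico] at hi hj; omega)
        (fun j hj => by rw [natDegree_X_pow_sub_C]; simp only [Finset.mem_Ico] at hj; omega) hja
  have hb' : b ^ p = -(y ^ p * t) := by rw [hb, sum_natCast_mul_pow_char_mul]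
  have ht : t = (-b / y) ^ p := by
    rw [div_pow, neg_pow, neg_one_pow_char, hb']
    field_simp
  rw [ht]
  exact AdjoinRoot.pow_char_mem_bot p ⟨v, (AdjoinRoot.root_X_pow_sub_C_pow p v).symm⟩ _
end

section
/- Let p be a prime, A an integral domain of characteristic p, and a ∈ A. Let B := A[X]/(X^p − X − a). If u ∈ A is such that the image of u in B is a p-th power of an element of B, then u is already a p-th power in A. -/
/-!
Write `x` for the class of `X` in `B = A[X]/(X^p - X - a)`, so `x ^ p = x + a`. Every element of
`B` is `f(x)` with `deg f < p`, and in characteristic `p` we have `f(x) ^ p = g(x ^ p) = g(x + a)`,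
where `g` is `f` with its coefficients raised to the `p`-th power. If this equals `u`, then
`g(X + a)` and the constant `u` are two polynomials of degree `< p` with the same image in `B`,
hence equal; so `g = u`, and `u` is the `p`-th power of the constant coefficient of `f`.
-/

open Polynomial

namespace Polynomial

variable {R : Type*} [CommRing R] {n : ℕ} (a : R)

theorem monic_X_pow_sub_X_sub_C (hn : 1 < n) : (X ^ n - X - C a).Monic := by
  monicity!
  simp [hn.le, hn.not_ge]

theorem degree_X_pow_sub_X_sub_C [Nontrivial R] (hn : 1 < n) :
    (X ^ n - X - C a).degree = (n : WithBot ℕ) := by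
  rw [sub_sub, degree_sub_eq_left_of_degree_lt] <;>
    simp only [degree_X_pow, degree_X_add_C, Nat.one_lt_cast, hn]

end Polynomial

namespace AdjoinRoot

variable {R : Type*} [CommRing R]

theorem exists_mk_eq_of_degree_lt [Nontrivial R] {q : R[X]} (hq : q.Monic) (b : AdjoinRoot q) :
    ∃ f : R[X], f.degree < q.degree ∧ mk q f = b := by
  refine ⟨modByMonicHom hq b, ?_, mk_leftInverse hq b⟩
  obtain ⟨f, rfl⟩ := mk_surjective b
  rw [modByMonicHom_mk]
  exact degree_modByMonic_lt f hq

theorem mk_injOn_degree_lt [Nontrivial R] {q : R[X]} (hq : q.Monic) :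
    Set.InjOn (mk q) {f | f.degree < q.degree} := by
  intro f hf g hg hfg
  have := congrArg (modByMonicHom hq) hfg
  rwa [modByMonicHom_mk, modByMonicHom_mk, (modByMonic_eq_self_iff hq).2 hf,
    (modByMonic_eq_self_iff hq).2 hg] at this

section ArtinSchreier

variable {n : ℕ} (a : R)

theorem root_X_pow_sub_X_sub_C_pow :
    root (X ^ n - X - C a) ^ n = root (X ^ n - X - C a) + of (X ^ n - X - C a) a := by
  have h := eval₂_root (X ^ n - X - C a)
  simp only [eval₂_sub, eval₂_X_pow, eval₂_X, eval₂_C] at h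
  exact sub_eq_zero.1 (by rw [← sub_sub]; exact h)

theorem mk_expand_eq_mk_taylor (g : R[X]) :
    mk (X ^ n - X - C a) (expand R n g) = mk (X ^ n - X - C a) (taylor a g) := by
  rw [← aeval_eq, ← aeval_eq, expand_aeval, root_X_pow_sub_X_sub_C_pow, taylor_apply, aeval_comp]
  simp only [map_add, aeval_X, aeval_C, algebraMap_eq]

end ArtinSchreier

end AdjoinRoot

theorem pth_power_in_artin_schreier_extension_general
    (p : ℕ) (hp : p.Prime) (A : Type*) [CommRing A] [CharP A p]
    (a u : A)
    (h : ∃ b : AdjoinRoot (X ^ p - X - C a),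
      b ^ p = AdjoinRoot.of (X ^ p - X - C a) u) :
    ∃ c : A, c ^ p = u := by
  have := Fact.mk hp
  have : Nontrivial A := CharP.nontrivial_of_char_ne_one hp.ne_one
  have hq := monic_X_pow_sub_X_sub_C a hp.one_lt
  have hdeg := degree_X_pow_sub_X_sub_C a hp.one_lt
  obtain ⟨b, hb⟩ := h
  obtain ⟨f, hf, rfl⟩ := AdjoinRoot.exists_mk_eq_of_degree_lt hq b
  set g := f.map (frobenius A p)
  have hfg : f ^ p = expand A p g := by rw [← map_frobenius_expand, map_expand]
  have hg : taylor a g = C u := by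
    refine AdjoinRoot.mk_injOn_degree_lt hq ?_ ?_ ?_
    · rw [Set.mem_ofPred_eq, degree_taylor]
      exact degree_map_le.trans_lt hf
    · rw [Set.mem_ofPred_eq, hdeg]
      exact degree_C_le.trans_lt (by exact_mod_cast hp.pos)
    · rw [← AdjoinRoot.mk_expand_eq_mk_taylor, ← hfg, map_pow, hb, AdjoinRoot.mk_C]
  have hgC : g = C u := taylor_injective a (hg.trans (taylor_C a u).symm)
  exact ⟨f.coeff 0, by simpa [g, coeff_map, frobenius_def] using congrArg (coeff · 0) hgC⟩

/-- If `u ∈ A` becomes a `p`-th power in the Artin–Schreier extension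
`B = A[X]/(X^p − X − a)` of an integral domain `A` of characteristic `p`,
then `u` is already a `p`-th power in `A`. -/
theorem pth_power_in_artin_schreier_extension
    (p : ℕ) (hp : p.Prime) (A : Type*) [CommRing A] [IsDomain A] [CharP A p]
    (a u : A)
    (h : ∃ b : AdjoinRoot (X ^ p - X - C a),
      b ^ p = AdjoinRoot.of (X ^ p - X - C a) u) :
    ∃ c : A, c ^ p = u :=
  pth_power_in_artin_schreier_extension_general p hp A a u h
end

section
/- Let p be a prime, n ≥ 1 a natural number, and k an integral domain of characteristic p. For a p-typical Witt vector x of length n over k, one has F(x) = x (where F is the functorial map on length-n Witt vectors induced by the Frobenius endomorphism a ↦ a^p of k, i.e. raising each coefficient to the p-th power) if and only if there exists m ∈ ℤ/p^nℤ such that x is the image of m under the composite of the canonical ring isomorphism ℤ/p^nℤ ≅ W_n(𝔽_p) (Mathlib's TruncatedWittVector.zmodEquivTrunc) with the map W_n(𝔽_p) → W_n(k) induced by the canonical embedding 𝔽_p → k. -/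
/-- The functorial map on truncated Witt vectors induced by a ring homomorphism,
applied coefficientwise. -/
def twMap {p n : ℕ} {A B : Type*} [CommRing A] [CommRing B] (f : A →+* B)
    (x : TruncatedWittVector p n A) : TruncatedWittVector p n B :=
  TruncatedWittVector.mk p fun i => f (x.coeff i)

open Polynomial in
lemma key (p : ℕ) [hp : Fact p.Prime] (k : Type*) [CommRing k] [IsDomain k] [CharP k p]
    (a : k) (ha : a ^ p = a) : ∃ b : ZMod p, ZMod.castHom (dvd_refl p) k b = a := by
  classical
  set g := ZMod.castHom (dvd_refl p) k
  have hginj : Function.Injective g := g.injective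
  set P : k[X] := X ^ p - X with hP
  have hdeg : P.natDegree = p := by
    rw [hP, natDegree_sub_eq_left_of_natDegree_lt] <;>
      simp [natDegree_X_pow, hp.out.one_lt]
  have hP0 : P ≠ 0 := fun h => by
    have := hdeg
    rw [h] at this
    exact hp.out.ne_zero (by simpa using this.symm)
  have hroot : ∀ c : k, c ^ p = c → c ∈ P.roots := fun c hc => by
    rw [mem_roots hP0]
    simp [IsRoot, hP, hc]
  by_contra hcon
  push_neg at hcon
  set T : Finset k := Finset.univ.image g with hT
  have hcard : T.card = p := by
    rw [hT, Finset.card_image_of_injective _ hginj, Finset.card_univ, ZMod.card]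
  have hsub : (insert a T).val ⊆ P.roots := by
    intro c hc
    rw [Finset.mem_val, Finset.mem_insert] at hc
    rcases hc with rfl | hc
    · exact hroot _ ha
    · rw [hT] at hc
      simp only [Finset.mem_image, Finset.mem_univ, true_and] at hc
      obtain ⟨b, rfl⟩ := hc
      exact hroot _ (by rw [← map_pow, ZMod.pow_card])
  have := card_le_degree_of_subset_roots hsub
  rw [Finset.card_insert_of_notMem, hcard, hdeg] at this
  · omega
  · simp only [hT, Finset.mem_image]
    rintro ⟨b, -, hb⟩
    exact hcon b hb


/-- Exactness on the left of the Artin–Schreier–Witt sequence: over an integral domain `k`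
of characteristic `p`, a length-`n` Witt vector `x` satisfies `F(x) = x` if and only if `x`
comes from `ℤ/pⁿℤ` via the canonical isomorphism `ℤ/pⁿℤ ≅ Wₙ(𝔽_p)` followed by the map
`Wₙ(𝔽_p) → Wₙ(k)` induced by `𝔽_p → k`. -/
theorem frobenius_fixed_iff_zmod
    (p : ℕ) [hp : Fact p.Prime] (n : ℕ) (hn : 1 ≤ n)
    (k : Type*) [CommRing k] [IsDomain k] [CharP k p]
    (x : TruncatedWittVector p n k) :
    twMap (frobenius k p) x = x ↔
      ∃ m : ZMod (p ^ n),
        x = twMap (ZMod.castHom (dvd_refl p) k)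
          (TruncatedWittVector.zmodEquivTrunc p n m) := by
  constructor
  · intro h
    have hc : ∀ i, (x.coeff i) ^ p = x.coeff i := fun i => by
      have := congrArg (fun y => TruncatedWittVector.coeff i y) h
      simpa [twMap, TruncatedWittVector.coeff_mk, frobenius_def] using this
    choose b hb using fun i => key p k (x.coeff i) (hc i)
    refine ⟨(TruncatedWittVector.zmodEquivTrunc p n).symm (TruncatedWittVector.mk p b), ?_⟩
    rw [RingEquiv.apply_symm_apply]
    ext i
    simp [twMap, TruncatedWittVector.coeff_mk, hb]
  · rintro ⟨m, rfl⟩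
    ext i
    simp only [twMap, TruncatedWittVector.coeff_mk, frobenius_def]
    rw [← map_pow, ZMod.pow_card]
end

section
/- Let p be a prime, n ≥ 1 a natural number, and k a separably closed field of characteristic p. Then the map F − Id on the p-typical Witt vectors of length n over k is surjective: for every a ∈ W_n(k) there exists x ∈ W_n(k) with F(x) − x = a, where F is the functorial map induced by the Frobenius endomorphism of k (raising each Witt coefficient to the p-th power). -/
open Function

namespace WittVector

variable {p : ℕ} [Fact p.Prime] {R : Type*} [CommRing R]

theorem twMap_truncate {S : Type*} [CommRing S] (f : R →+* S) (n : ℕ) (x : WittVector p R) :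
    twMap f (truncate n x) = truncate n (map f x) := by
  ext i
  rw [twMap, TruncatedWittVector.coeff_mk, coeff_truncate, coeff_truncate, map_coeff]

theorem sub_coeff_zero (x y : WittVector p R) : (x - y).coeff 0 = x.coeff 0 - y.coeff 0 :=
  map_sub constantCoeff x y

theorem iterate_verschiebung_mem_ker_truncate_succ {n : ℕ} {y : WittVector p R}
    (hy : y.coeff 0 = 0) :
    verschiebung^[n] y ∈ RingHom.ker (truncate (p := p) (R := R) (n + 1)) := by
  rw [mem_ker_truncate]
  intro i hi
  rcases Nat.lt_succ_iff_lt_or_eq.mp hi with hi | rfl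
  · exact iterate_verschiebung_coeff_eq_zero y hi
  · simpa only [zero_add] using (iterate_verschiebung_coeff y i 0).trans hy

theorem exists_map_sub_self_sub_mem_ker_truncate (f : R →+* R)
    (hf : Surjective fun c => f c - c) (a : WittVector p R) (n : ℕ) :
    ∃ x : WittVector p R, map f x - x - a ∈ RingHom.ker (truncate (p := p) n) := by
  induction n with
  | zero => exact ⟨0, (mem_ker_truncate _ _).mpr fun i hi => absurd hi i.not_lt_zero⟩
  | succ n ih =>
    obtain ⟨x, hx⟩ := ih
    set d := map f x - x - a with hd_def
    have hd : d = verschiebung^[n] (d.shift n) :=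
      eq_iterate_verschiebung ((mem_ker_truncate _ _).mp hx)
    obtain ⟨c, hc : f c - c = -d.coeff n⟩ := hf (-d.coeff n)
    have hcorr : map f (x + verschiebung^[n] (teichmuller p c))
        - (x + verschiebung^[n] (teichmuller p c)) - a
        = verschiebung^[n] (d.shift n + (teichmuller p (f c) - teichmuller p c)) := by
      rw [map_add, Semiconj.iterate_right (map_verschiebung f) n, map_teichmuller, iterate_map_add,
        iterate_map_sub, ← hd, hd_def]
      abel
    refine ⟨_, hcorr ▸ iterate_verschiebung_mem_ker_truncate_succ ?_⟩
    rw [add_coeff_zero, sub_coeff_zero, teichmuller_coeff_zero, teichmuller_coeff_zero, hc,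
      shift_coeff, add_zero, add_neg_cancel]

theorem twMap_sub_self_surjective (f : R →+* R) (hf : Surjective fun c => f c - c) (n : ℕ) :
    Surjective fun x : TruncatedWittVector p n R => twMap f x - x := by
  intro a
  obtain ⟨b, rfl⟩ := truncate_surjective p n R a
  obtain ⟨x, hx⟩ := exists_map_sub_self_sub_mem_ker_truncate f hf b n
  refine ⟨truncate n x, show twMap f (truncate n x) - truncate n x = truncate n b from ?_⟩
  rw [twMap_truncate, ← map_sub, ← sub_eq_zero, ← map_sub]
  exact hx

end WittVector

theorem IsSepClosed.surjective_frobenius_sub_self (p : ℕ) [Fact p.Prime] (k : Type*) [Field k]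
    [IsSepClosed k] [CharP k p] : Surjective fun c : k => frobenius k p c - c := by
  intro b
  obtain ⟨c, hc⟩ := exists_root_C_mul_X_pow_add_C_mul_X_add_C' p p 1 (-1) (-b) dvd_rfl
    (Fact.out : p.Prime).two_le (neg_ne_zero.mpr one_ne_zero)
  exact ⟨c, show frobenius k p c - c = b by rw [frobenius_def]; linear_combination hc⟩

theorem frobenius_sub_id_surjective_general
    (p : ℕ) [hp : Fact p.Prime] (n : ℕ)
    (k : Type*) [Field k] [IsSepClosed k] [CharP k p]
    (a : TruncatedWittVector p n k) :
    ∃ x : TruncatedWittVector p n k, twMap (frobenius k p) x - x = a :=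
  WittVector.twMap_sub_self_surjective _ (IsSepClosed.surjective_frobenius_sub_self p k) n a

/-- Surjectivity of `F − Id` on length-`n` Witt vectors over a separably closed field of
characteristic `p` (exactness of the Artin–Schreier–Witt sequence). -/
theorem frobenius_sub_id_surjective
    (p : ℕ) [hp : Fact p.Prime] (n : ℕ) (hn : 1 ≤ n)
    (k : Type*) [Field k] [IsSepClosed k] [CharP k p]
    (a : TruncatedWittVector p n k) :
    ∃ x : TruncatedWittVector p n k, twMap (frobenius k p) x - x = a :=
  frobenius_sub_id_surjective_general p (hp := hp) n k a
end

section
/- Let p be a prime, A a commutative ring, π a unit of A, and m₁, m₂ integers; set c := π^{m₂ − p·m₁} (an integer power of the unit π). Then for all x₁, x₂, y₁, y₂ ∈ A, the p-typical Witt vector of length 2 with coefficients (π^{−m₁}·(x₁+y₁), π^{−m₂}·(x₂ + y₂ − c·E_p(x₁,y₁))) equals the Witt vector sum of the Witt vector with coefficients (π^{−m₁}·x₁, π^{−m₂}·x₂) and the Witt vector with coefficients (π^{−m₁}·y₁, π^{−m₂}·y₂). In other words, the rescaling map (x₁,x₂) ↦ (x₁/π^{m₁}, x₂/π^{m₂})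 transforms the c-twisted group law (x₁,x₂) ⋆_c (y₁,y₂) = (x₁+y₁, x₂+y₂ − c·E_p(x₁,y₁)) into length-2 Witt vector addition. -/
/-- `E_p(a,b) = ∑_{k=1}^{p−1} (binom(p,k)/p)·a^k·b^{p−k}`. -/
def wittE (p : ℕ) {A : Type*} [CommRing A] (a b : A) : A :=
  ∑ k ∈ Finset.Ico 1 p, (p.choose k / p : ℕ) * a ^ k * b ^ (p - k)

/-! The ghost identity `w₁(S) = w₁(X) + w₁(Y)` for the second Witt addition polynomial reads
`(X₀ + Y₀)^p + p S₁ = X₀^p + p X₁ + Y₀^p + p Y₁`; since `(a + b)^p = a^p + b^p + p E_p(a, b)`,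
cancelling `p` in the torsion-free ring `ℤ[X, Y]` gives `S₁ = X₁ + Y₁ - E_p(X₀, Y₀)`.
The rescaling then matches the twisted law with Witt addition because `E_p` is homogeneous of
degree `p` and `π^{-m₂} π^{m₂ - p m₁} = (π^{-m₁})^p`. -/

open MvPolynomial

section wittE

variable {p : ℕ} {A : Type*} [CommRing A]

theorem map_wittE {B F : Type*} [CommRing B] [FunLike F A B] [RingHomClass F A B] (f : F)
    (a b : A) :
    f (wittE p a b) = wittE p (f a) (f b) := by
  simp [wittE]

theorem wittE_mul_mul (c a b : A) : wittE p (c * a) (c * b) = c ^ p * wittE p a b := by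
  rw [wittE, wittE, Finset.mul_sum]
  refine Finset.sum_congr rfl fun k hk => ?_
  rw [← pow_mul_pow_sub c (Finset.mem_Ico.mp hk).2.le]
  ring

theorem add_pow_prime_eq_add_add_mul_wittE (hp : p.Prime) (a b : A) :
    (a + b) ^ p = a ^ p + b ^ p + p * wittE p a b := by
  rw [(Commute.all a b).add_pow_prime_eq' hp, wittE]
  congr 3 with k
  ring

end wittE

namespace WittVector

variable {p : ℕ} [hp : Fact p.Prime]

theorem wittAdd_one :
    wittAdd p 1 = X (0, 1) + X (1, 1) - wittE p (X (0, 0)) (X (1, 0)) := by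
  have key := wittStructureInt_prop p (X (0 : Fin 2) + X 1 : MvPolynomial (Fin 2) ℤ) 1
  simp only [wittPolynomial_one, map_add, map_mul, map_pow, bind₁_X_right,
    rename_X, map_natCast] at key
  rw [show wittStructureInt p (X 0 + X 1) = wittAdd p from rfl, wittAdd_zero,
    add_pow_prime_eq_add_add_mul_wittE hp.out] at key
  refine mul_left_cancel₀ (Nat.cast_ne_zero.mpr hp.out.ne_zero) ?_
  linear_combination key

theorem add_coeff_one {R : Type*} [CommRing R] (x y : WittVector p R) :
    (x + y).coeff 1 = x.coeff 1 + y.coeff 1 - wittE p (x.coeff 0) (y.coeff 0) := by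
  rw [add_coeff, wittAdd_one, peval]
  simp [map_wittE]

end WittVector

namespace TruncatedWittVector

variable {p : ℕ} {R : Type*} [CommRing R]

theorem coeff_out_mk {n : ℕ} (a : Fin n → R) (i : ℕ) (hi : i < n) :
    (mk p a).out.coeff i = a ⟨i, hi⟩ :=
  coeff_out (mk p a) ⟨i, hi⟩

variable [Fact p.Prime]

theorem add_eq_truncateFun_out_add_out {n : ℕ} (x y : TruncatedWittVector p n R) :
    x + y = WittVector.truncateFun n (x.out + y.out) := by
  rw [WittVector.truncateFun_add, truncateFun_out, truncateFun_out]

theorem mk_add_mk_two (a₀ a₁ b₀ b₁ : R) :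
    mk p ![a₀, a₁] + mk p ![b₀, b₁] = mk p ![a₀ + b₀, a₁ + b₁ - wittE p a₀ b₀] := by
  ext i
  rw [add_eq_truncateFun_out_add_out, WittVector.coeff_truncateFun]
  fin_cases i
  · simp [WittVector.add_coeff_zero, coeff_out_mk]
  · simp [WittVector.add_coeff_one, coeff_out_mk]

end TruncatedWittVector

/-- Section 2.3: the rescaling `(x₁,x₂) ↦ (x₁/π^{m₁}, x₂/π^{m₂})` transforms the
`π^{m₂−pm₁}`-twisted group law into length-2 Witt vector addition. -/
theorem twisted_law_rescales_to_witt_addition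
    (p : ℕ) [hp : Fact p.Prime] (A : Type*) [CommRing A]
    (π : Aˣ) (m₁ m₂ : ℤ)
    (x₁ x₂ y₁ y₂ : A) :
    TruncatedWittVector.mk p
        ![((π ^ (-m₁) : Aˣ) : A) * (x₁ + y₁),
          ((π ^ (-m₂) : Aˣ) : A) *
            (x₂ + y₂ - ((π ^ (m₂ - (p : ℤ) * m₁) : Aˣ) : A) * wittE p x₁ y₁)] =
      TruncatedWittVector.mk p
          ![((π ^ (-m₁) : Aˣ) : A) * x₁, ((π ^ (-m₂) : Aˣ) : A) * x₂] +
        TruncatedWittVector.mk p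
          ![((π ^ (-m₁) : Aˣ) : A) * y₁, ((π ^ (-m₂) : Aˣ) : A) * y₂] := by
  have hc : ((π ^ (-m₂) : Aˣ) : A) * ((π ^ (m₂ - (p : ℤ) * m₁) : Aˣ) : A) =
      ((π ^ (-m₁) : Aˣ) : A) ^ p := by
    rw [← Units.val_mul, ← Units.val_pow_eq_pow_val, ← zpow_add, ← zpow_natCast, ← zpow_mul]
    ring_nf
  rw [TruncatedWittVector.mk_add_mk_two, wittE_mul_mul, ← hc]
  congr 3 <;> ring
end

section
/- Let p be a prime, A a commutative ring of characteristic p, and c ∈ A. Then for all x₁, x₂, y₁, y₂ ∈ A: (x₁+y₁)^p = x₁^p + y₁^p and (x₂ + y₂ − c·E_p(x₁,y₁))^p = x₂^p + y₂^p − c^p·E_p(x₁^p, y₁^p). In other words, the map F : (x₁,x₂) ↦ (x₁^p, x₂^p) is a group homomorphism from A × A equipped with the c-twisted group law (x₁,x₂) ⋆_c (y₁,y₂) = (x₁+y₁, x₂+y₂ − c·E_p(x₁,y₁)) to A × A equipped with the c^p-twisted group law. -/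
/-- Section 2.3.1: in characteristic `p`, `F : (x₁,x₂) ↦ (x₁^p, x₂^p)` is a homomorphism
from the `c`-twisted group law to the `c^p`-twisted group law. -/
theorem frobenius_twisted_hom
    (p : ℕ) (hp : p.Prime) (A : Type*) [CommRing A] [CharP A p] (c : A)
    (x₁ x₂ y₁ y₂ : A) :
    (x₁ + y₁) ^ p = x₁ ^ p + y₁ ^ p ∧
    (x₂ + y₂ - c * wittE p x₁ y₁) ^ p =
      x₂ ^ p + y₂ ^ p - c ^ p * wittE p (x₁ ^ p) (y₁ ^ p) := by
  haveI := Fact.mk hp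
  have hE : (wittE p x₁ y₁) ^ p = wittE p (x₁ ^ p) (y₁ ^ p) := by
    simp only [wittE, ← frobenius_def, map_sum, map_mul, map_pow, map_natCast]
  refine ⟨add_pow_char x₁ y₁ p, ?_⟩
  rw [sub_pow_char, add_pow_char, mul_pow, hE]
end

section
/- Let p be a prime and k a perfect field of characteristic p. For every formal Laurent series f ∈ k((t)) that is not a p-th power in k((t)), there exists g ∈ k((t)) such that f − g^p is nonzero and its order (the smallest exponent with nonzero coefficient) is not divisible by p. -/
/-!
In characteristic `p`, `(∑ aₙ tⁿ) ^ p = ∑ aₙ ^ p t ^ (p n)`. Since `k` is perfect, there is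
therefore a `g` whose `p`-th power agrees with `f` at every exponent divisible by `p`. Then
`f - g ^ p` is nonzero because `f` is not a `p`-th power, and it vanishes at all multiples of `p`,
so its order is not one of them.
-/

open HahnSeries PowerSeries LaurentSeries

theorem LaurentSeries.pow_eq_single_mul_powerSeriesPart_pow {R : Type*} [CommSemiring R]
    (x : R⸨X⸩) (n : ℕ) : x ^ n = single (n * x.order) 1 * (x.powerSeriesPart : R⸨X⸩) ^ n := by
  conv_lhs => rw [← single_order_mul_powerSeriesPart x]
  rw [mul_pow, single_pow, one_pow, nsmul_eq_mul]

section ExpChar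

variable {R : Type*} [CommRing R] (p : ℕ) [ExpChar R p]

theorem PowerSeries.pow_expChar_eq_map_frobenius_expand (φ : R⟦X⟧) :
    φ ^ p = (φ.expand p (expChar_ne_zero R p)).map (frobenius R p) :=
  (MvPowerSeries.map_frobenius_expand p (expChar_ne_zero R p)).symm

theorem PowerSeries.coeff_pow_expChar_mul (φ : R⟦X⟧) (m : ℕ) :
    coeff (p * m) (φ ^ p) = coeff m φ ^ p := by
  rw [pow_expChar_eq_map_frobenius_expand, coeff_map, coeff_expand_mul, frobenius_def]

theorem PowerSeries.coeff_pow_expChar_of_not_dvd (φ : R⟦X⟧) {m : ℕ} (hm : ¬ p ∣ m) :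
    coeff m (φ ^ p) = 0 := by
  rw [pow_expChar_eq_map_frobenius_expand, coeff_map, coeff_expand_of_not_dvd _ _ _ hm,
    map_zero]

namespace LaurentSeries

theorem coeff_coe_pow_expChar_mul (φ : R⟦X⟧) (n : ℤ) :
    ((φ : R⸨X⸩) ^ p).coeff (p * n) = (φ : R⸨X⸩).coeff n ^ p := by
  rcases le_or_gt 0 n with hn | hn
  · obtain ⟨m, rfl⟩ := Int.eq_ofNat_of_zero_le hn
    rw [← coe_pow, ← Nat.cast_mul, coeff_coe_powerSeries, coeff_coe_powerSeries,
      PowerSeries.coeff_pow_expChar_mul]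
  · have hpn : (p : ℤ) * n < 0 := mul_neg_of_pos_of_neg (by exact_mod_cast expChar_pos R p) hn
    rw [← coe_pow, coeff_coe, coeff_coe, if_pos hpn, if_pos hn, zero_pow (expChar_ne_zero R p)]

theorem coeff_coe_pow_expChar_of_not_dvd (φ : R⟦X⟧) {c : ℤ} (hc : ¬ (p : ℤ) ∣ c) :
    ((φ : R⸨X⸩) ^ p).coeff c = 0 := by
  rcases le_or_gt 0 c with hc0 | hc0
  · obtain ⟨m, rfl⟩ := Int.eq_ofNat_of_zero_le hc0
    rw [← coe_pow, coeff_coe_powerSeries,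
      PowerSeries.coeff_pow_expChar_of_not_dvd p φ (by exact_mod_cast hc)]
  · rw [← coe_pow, coeff_coe, if_pos hc0]

theorem coeff_pow_expChar_mul (x : R⸨X⸩) (n : ℤ) :
    (x ^ p).coeff (p * n) = x.coeff n ^ p := by
  conv_rhs => rw [← single_order_mul_powerSeriesPart x]
  rw [pow_eq_single_mul_powerSeriesPart_pow, coeff_single_mul, coeff_single_mul, one_mul,
    one_mul, ← mul_sub, coeff_coe_pow_expChar_mul]

theorem coeff_pow_expChar_of_not_dvd (x : R⸨X⸩) {c : ℤ} (hc : ¬ (p : ℤ) ∣ c) :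
    (x ^ p).coeff c = 0 := by
  rw [pow_eq_single_mul_powerSeriesPart_pow, coeff_single_mul, one_mul,
    coeff_coe_pow_expChar_of_not_dvd]
  exact mt (dvd_sub_left (dvd_mul_right _ _)).mp hc

theorem exists_coeff_pow_expChar_mul_eq [PerfectRing R p] (f : R⸨X⸩) :
    ∃ g : R⸨X⸩, ∀ n : ℤ, (g ^ p).coeff (p * n) = f.coeff (p * n) := by
  have hbdd :
      BddBelow (Function.support fun n : ℤ ↦ (frobeniusEquiv R p).symm (f.coeff (p * n))) := by
    refine ⟨f.order / p, fun n hn ↦ Int.ediv_le_of_le_mul (by exact_mod_cast expChar_pos R p) ?_⟩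
    rw [mul_comm]
    exact order_le_of_coeff_ne_zero fun h ↦ hn (by simp [h])
  exact ⟨ofSuppBddBelow _ hbdd, fun n ↦ by
    rw [coeff_pow_expChar_mul, coeff_ofSuppBddBelow, frobeniusEquiv_symm_pow_p]⟩

end LaurentSeries

end ExpChar

theorem not_pth_power_normalization_general
    (p : ℕ) (k : Type*) [Field k]
    [ExpChar k p] [PerfectRing k p]
    (f : LaurentSeries k) (hf : ¬ ∃ w : LaurentSeries k, w ^ p = f) :
    ∃ g : LaurentSeries k,
      f - g ^ p ≠ 0 ∧ ¬ (p : ℤ) ∣ (f - g ^ p).order := by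
  obtain ⟨g, hg⟩ := LaurentSeries.exists_coeff_pow_expChar_mul_eq p f
  have hne : f - g ^ p ≠ 0 := fun h ↦ hf ⟨g, (sub_eq_zero.mp h).symm⟩
  refine ⟨g, hne, fun ⟨n, hn⟩ ↦ hne (coeff_order_eq_zero.mp ?_)⟩
  rw [hn, coeff_sub, hg, sub_self]

/-- Normalization modulo `p`-th powers over `k((t))`, `k` perfect (proof of
Proposition 2.5.1 b)): if `f` is not a `p`-th power then `f − g^p` can be made nonzero
of order prime to `p`. -/
theorem not_pth_power_normalization
    (p : ℕ) (hp : p.Prime) (k : Type*) [Field k] [CharP k p]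
    [ExpChar k p] [PerfectRing k p]
    (f : LaurentSeries k) (hf : ¬ ∃ w : LaurentSeries k, w ^ p = f) :
    ∃ g : LaurentSeries k,
      f - g ^ p ≠ 0 ∧ ¬ (p : ℤ) ∣ (f - g ^ p).order :=
  not_pth_power_normalization_general p k f hf
end
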